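/- Assume the balance condition α + γ > 1 and set δ = 1 − 1/α + γ/α > 0 and κ_t(y) = θ_t^0(y). For every T > 0 there exists C > 0 such that for every x, y ∈ ℝ^d, every solution υ_·(x) ∈ Υ(x) of dυ_t/dt = b(υ_t), υ_0 = x, and every t ∈ [0,T], one has e^{−C t^δ} |x − κ_t(y)| − C t^{1/α + δ} ≤ |υ_t(x) − y| ≤ e^{C t^δ} |x − κ_t(y)| + C t^{1/α + δ}. -/

import Mathlib

open MeasureTheory Real Set

/-!
Both `s ↦ υ s - θ (t - s)` and `s ↦ υ (t - s) - θ s` run between `x - θ t` and `υ t - y`, and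
their derivatives are differences `b a - b(τ, c)` of the drift and its mollification. The
mollification error is `O(τ^{γ/α})` by Hölder continuity, and Young's inequality
`r^γ ≤ t^{δ-1} r + t^{γ/α}` turns the Hölder bound into a Lipschitz bound with constant `C₀ t^{δ-1}`
up to an error `O(t^{γ/α})`. Grönwall's inequality on `[0, t]` gives both estimates, because
`t · t^{δ-1} = t^δ` and `t · t^{γ/α} = t^{1/α+δ}`.
-/

/-- `Euc d` is the Euclidean space `ℝ^d`. -/
abbrev Euc (d : ℕ) := EuclideanSpace ℝ (Fin d)

/-- The Gaussian mollification `b(t,x)` of the drift `b` at scale `t^{1/α}`: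
`b(t,x) = (2π)^{-d/2} t^{-d/α} ∫ b(z) exp(-|z-x|²/(2 t^{2/α})) dz` for `t > 0`
(with the natural boundary value `b(x)` for `t ≤ 0`). -/
noncomputable def moll (d : ℕ) (α : ℝ) (b : Euc d → Euc d) (t : ℝ) (x : Euc d) : Euc d :=
  if t ≤ 0 then b x
  else ((2 * Real.pi) ^ (-(d : ℝ) / 2) * t ^ (-(d : ℝ) / α)) •
    ∫ z : Euc d, Real.exp (-‖z - x‖ ^ 2 / (2 * t ^ (2 / α))) • b z

/-- `IsSol F x0 f` : `f` solves the Cauchy problem `f' (t) = F t (f t)` on `[0,∞)`, `f 0 = x0`. -/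
def IsSol (d : ℕ) (F : ℝ → Euc d → Euc d) (x0 : Euc d) (f : ℝ → Euc d) : Prop :=
  f 0 = x0 ∧ ∀ t : ℝ, 0 ≤ t → HasDerivWithinAt f (F t (f t)) (Set.Ici 0) t

lemma rpow_le_four_mul_exp {a β : ℝ} (ha : 0 ≤ a) (hβ0 : 0 ≤ β) (hβ1 : β ≤ 1) :
    a ^ β ≤ 4 * rexp (a / 4) := by
  have h : a ^ β ≤ 1 + a := by
    rcases le_total a 1 with h | h
    · linarith [rpow_le_one ha h hβ0]
    · have h' := rpow_le_rpow_of_exponent_le h hβ1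
      rw [rpow_one] at h'
      linarith
  linarith [add_one_le_exp (a / 4)]

lemma rpow_mul_exp_le {u s γ : ℝ} (hu : 0 ≤ u) (hs : 0 < s) (hγ0 : 0 ≤ γ) (hγ1 : γ ≤ 1) :
    u ^ γ * rexp (-(2 * s)⁻¹ * u ^ 2) ≤ 4 * s ^ (γ / 2) * rexp (-(4 * s)⁻¹ * u ^ 2) := by
  have hsplit : u ^ γ = s ^ (γ / 2) * (u ^ 2 / s) ^ (γ / 2) := by
    rw [div_rpow (by positivity) hs.le, mul_div_cancel₀ _ (rpow_pos_of_pos hs _).ne',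
      ← rpow_natCast, ← rpow_mul hu]
    norm_num [mul_div_cancel₀]
  calc u ^ γ * rexp (-(2 * s)⁻¹ * u ^ 2)
      ≤ s ^ (γ / 2) * (4 * rexp (u ^ 2 / s / 4)) * rexp (-(2 * s)⁻¹ * u ^ 2) := by
        rw [hsplit]
        gcongr
        exact rpow_le_four_mul_exp (by positivity) (by linarith) (by linarith)
    _ = 4 * s ^ (γ / 2) * rexp (-(4 * s)⁻¹ * u ^ 2) := by
        rw [mul_assoc, mul_assoc, ← exp_add]
        ring_nf

/-- Weighted AM–GM: `u ^ γ = (t ^ p * u) ^ γ * (t ^ q) ^ (1 - γ)`. -/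
lemma rpow_le_rpow_mul_add_rpow {u t γ p q : ℝ} (hu : 0 ≤ u) (ht : 0 < t) (hγ0 : 0 ≤ γ)
    (hγ1 : γ ≤ 1) (hpq : p * γ + q * (1 - γ) = 0) :
    u ^ γ ≤ t ^ p * u + t ^ q := by
  have hA : 0 ≤ t ^ p * u := mul_nonneg (rpow_nonneg ht.le p) hu
  have hB : 0 ≤ t ^ q := rpow_nonneg ht.le q
  have hamgm := geom_mean_le_arith_mean2_weighted hγ0 (sub_nonneg.2 hγ1) hA hB
    (add_sub_cancel γ 1)
  have hlhs : (t ^ p * u) ^ γ * (t ^ q) ^ (1 - γ) = u ^ γ := by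
    rw [mul_rpow (rpow_nonneg ht.le p) hu, ← rpow_mul ht.le, ← rpow_mul ht.le, mul_right_comm,
      ← rpow_add ht, hpq, rpow_zero, one_mul]
  nlinarith [mul_nonneg (sub_nonneg.2 hγ1) hA, mul_nonneg hγ0 hB]

lemma continuous_of_norm_sub_le_mul_rpow {X Y : Type*} [SeminormedAddCommGroup X]
    [SeminormedAddCommGroup Y] {f : X → Y} {C γ : ℝ} (hγ : 0 < γ)
    (hf : ∀ x y, ‖f x - f y‖ ≤ C * ‖x - y‖ ^ γ) : Continuous f := by
  refine continuous_iff_continuousAt.2 fun x => tendsto_iff_norm_sub_tendsto_zero.2 ?_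
  refine squeeze_zero (fun _ => norm_nonneg _) (fun y => hf y x) ?_
  have hcont : Continuous fun y => C * ‖y - x‖ ^ γ :=
    continuous_const.mul ((continuous_id.sub continuous_const).norm.rpow_const
      fun _ => Or.inr hγ.le)
  simpa [zero_rpow hγ.ne'] using hcont.tendsto x

lemma gronwallBound_le_add_mul_exp {B K ε t : ℝ} (hK : 0 ≤ K) (hε : 0 ≤ ε) :
    gronwallBound B K ε t ≤ (B + ε * t) * rexp (K * t) := by
  rcases hK.eq_or_lt with rfl | hK
  · simp [gronwallBound_K0]
  rw [gronwallBound_of_K_ne_0 hK.ne']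
  have hexp : rexp (K * t) - 1 ≤ K * t * rexp (K * t) := by
    have h := mul_le_mul_of_nonneg_left (one_sub_le_exp_neg (K * t)) (exp_pos (K * t)).le
    rw [← exp_add, add_neg_cancel, exp_zero] at h
    linarith
  have h : ε / K * (rexp (K * t) - 1) ≤ ε * t * rexp (K * t) :=
    calc ε / K * (rexp (K * t) - 1) ≤ ε / K * (K * t * rexp (K * t)) := by gcongr
      _ = ε * t * rexp (K * t) := by field_simp
  linarith

lemma gronwallBound_rpow_le {B C₀ C₁ δ q t T : ℝ} (hB : 0 ≤ B) (hC₀ : 0 ≤ C₀) (hC₁ : 0 ≤ C₁)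
    (hδ : 0 ≤ δ) (ht : 0 < t) (htT : t ≤ T) :
    gronwallBound B (C₀ * t ^ (δ - 1)) (C₁ * t ^ (q - 1)) t ≤
      rexp ((C₁ * rexp (C₀ * T ^ δ) + C₀) * t ^ δ) * B +
        (C₁ * rexp (C₀ * T ^ δ) + C₀) * t ^ q := by
  set C := C₁ * rexp (C₀ * T ^ δ) + C₀
  have hmul : ∀ r : ℝ, t ^ (r - 1) * t = t ^ r := fun r => by
    rw [rpow_sub_one ht.ne', div_mul_cancel₀ _ ht.ne']
  have hexp : rexp (C₀ * t ^ δ) ≤ rexp (C * t ^ δ) :=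
    exp_le_exp.2 (mul_le_mul_of_nonneg_right (le_add_of_nonneg_left (by positivity))
      (rpow_nonneg ht.le δ))
  have hcoef : C₁ * rexp (C₀ * t ^ δ) ≤ C :=
    le_add_of_le_of_nonneg (mul_le_mul_of_nonneg_left (exp_le_exp.2
      (mul_le_mul_of_nonneg_left (rpow_le_rpow ht.le htT hδ) hC₀)) hC₁) hC₀
  calc gronwallBound B (C₀ * t ^ (δ - 1)) (C₁ * t ^ (q - 1)) t
      ≤ (B + C₁ * t ^ (q - 1) * t) * rexp (C₀ * t ^ (δ - 1) * t) :=
        gronwallBound_le_add_mul_exp (by positivity) (by positivity)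
    _ = rexp (C₀ * t ^ δ) * B + C₁ * rexp (C₀ * t ^ δ) * t ^ q := by
        rw [mul_assoc C₀, mul_assoc C₁, hmul, hmul]
        ring
    _ ≤ rexp (C * t ^ δ) * B + C * t ^ q := by
        gcongr

lemma exp_neg_mul_sub_le_of_le_exp_mul_add {A B X c : ℝ} (hX : 0 ≤ X) (hc : 0 ≤ c)
    (h : A ≤ rexp X * B + c) : rexp (-X) * A - c ≤ B := by
  have hA : rexp (-X) * A ≤ B + rexp (-X) * c :=
    calc rexp (-X) * A ≤ rexp (-X) * (rexp X * B + c) :=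
          mul_le_mul_of_nonneg_left h (exp_pos _).le
      _ = B + rexp (-X) * c := by
          rw [mul_add, ← mul_assoc, ← exp_add, neg_add_cancel, exp_zero, one_mul]
  have hc' : rexp (-X) * c ≤ c := mul_le_of_le_one_left hc (exp_le_one_iff.2 (neg_nonpos.2 hX))
  linarith

section GaussianAverage

variable {V E : Type*} [NormedAddCommGroup V] [InnerProductSpace ℝ V] [FiniteDimensional ℝ V]
  [MeasurableSpace V] [BorelSpace V] [NormedAddCommGroup E] [NormedSpace ℝ E]

lemma integral_exp_neg_mul_sq_norm_sub {c : ℝ} (hc : 0 < c) (x : V) :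
    ∫ z, rexp (-c * ‖z - x‖ ^ 2) = (π / c) ^ (Module.finrank ℝ V / 2 : ℝ) := by
  rw [integral_sub_right_eq_self (fun z => rexp (-c * ‖z‖ ^ 2)) x,
    GaussianFourier.integral_rexp_neg_mul_sq_norm hc]

lemma integrable_exp_neg_mul_sq_norm_sub {c : ℝ} (hc : 0 < c) (x : V) :
    Integrable fun z => rexp (-c * ‖z - x‖ ^ 2) :=
  .of_integral_ne_zero (by rw [integral_exp_neg_mul_sq_norm_sub hc]; positivity)

noncomputable def gaussianAverage (s : ℝ) (f : V → E) (x : V) : E :=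
  (2 * π * s) ^ (-(Module.finrank ℝ V : ℝ) / 2) • ∫ z, rexp (-(2 * s)⁻¹ * ‖z - x‖ ^ 2) • f z

lemma norm_gaussianAverage_sub_le [CompleteSpace E] {f : V → E} {C₀ γ s : ℝ} (hC₀ : 0 ≤ C₀)
    (hγ0 : 0 < γ) (hγ1 : γ ≤ 1) (hf : ∀ x y, ‖f x - f y‖ ≤ C₀ * ‖x - y‖ ^ γ) (hs : 0 < s)
    (x : V) :
    ‖gaussianAverage s f x - f x‖ ≤
      2 ^ (Module.finrank ℝ V / 2 : ℝ) * 4 * C₀ * s ^ (γ / 2) := by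
  set n : ℝ := (Module.finrank ℝ V : ℝ)
  have hc : ∀ k : ℝ, 0 < k → (2 * π * s) ^ (-n / 2) * (π / (2 * k * s)⁻¹) ^ (n / 2) =
      k ^ (n / 2) := fun k hk => by
    rw [div_inv_eq_mul, show π * (2 * k * s) = k * (2 * π * s) by ring,
      mul_rpow hk.le (by positivity), neg_div, rpow_neg (by positivity)]
    field_simp
  set c : ℝ := (2 * π * s) ^ (-n / 2)
  set w : V → ℝ := fun z => rexp (-(2 * s)⁻¹ * ‖z - x‖ ^ 2)
  have hdom : ∀ z, ‖w z • (f z - f x)‖ ≤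
      4 * C₀ * s ^ (γ / 2) * rexp (-(2 * 2 * s)⁻¹ * ‖z - x‖ ^ 2) := fun z => by
    rw [norm_smul, norm_of_nonneg (exp_pos _).le]
    calc w z * ‖f z - f x‖ ≤ w z * (C₀ * ‖z - x‖ ^ γ) :=
          mul_le_mul_of_nonneg_left (hf z x) (exp_pos _).le
      _ = C₀ * (‖z - x‖ ^ γ * rexp (-(2 * s)⁻¹ * ‖z - x‖ ^ 2)) := by ring
      _ ≤ C₀ * (4 * s ^ (γ / 2) * rexp (-(4 * s)⁻¹ * ‖z - x‖ ^ 2)) :=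
          mul_le_mul_of_nonneg_left (rpow_mul_exp_le (norm_nonneg _) hs hγ0.le hγ1) hC₀
      _ = _ := by ring_nf
  have hfc : Continuous f := continuous_of_norm_sub_le_mul_rpow hγ0 hf
  have hw : Integrable w := integrable_exp_neg_mul_sq_norm_sub (by positivity) x
  have hint : Integrable fun z => w z • (f z - f x) :=
    ((integrable_exp_neg_mul_sq_norm_sub (by positivity) x).const_mul _).mono'
      (by fun_prop : Continuous fun z => w z • (f z - f x)).aestronglyMeasurable
      (ae_of_all _ hdom)
  have hmass : c * ∫ z, w z = 1 := by
    have h := hc 1 one_pos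
    rw [mul_one, one_rpow] at h
    rwa [integral_exp_neg_mul_sq_norm_sub (by positivity)]
  have hsub : gaussianAverage s f x - f x = c • ∫ z, w z • (f z - f x) := by
    have hsplit : (fun z => w z • f z) = fun z => w z • (f z - f x) + w z • f x := by
      ext z
      rw [← smul_add, sub_add_cancel]
    rw [gaussianAverage, hsplit, integral_add hint (hw.smul_const _), integral_smul_const,
      smul_add, smul_smul, hmass, one_smul, add_sub_cancel_right]
  calc ‖gaussianAverage s f x - f x‖ = c * ‖∫ z, w z • (f z - f x)‖ := by
        rw [hsub, norm_smul, norm_of_nonneg (by positivity)]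
    _ ≤ c * ∫ z, 4 * C₀ * s ^ (γ / 2) * rexp (-(2 * 2 * s)⁻¹ * ‖z - x‖ ^ 2) := by
        gcongr
        exact norm_integral_le_of_norm_le
          ((integrable_exp_neg_mul_sq_norm_sub (by positivity) x).const_mul _) (ae_of_all _ hdom)
    _ = 4 * C₀ * s ^ (γ / 2) * (c * (π / (2 * 2 * s)⁻¹) ^ (n / 2)) := by
        rw [integral_const_mul, integral_exp_neg_mul_sq_norm_sub (by positivity)]
        ring
    _ = 2 ^ (n / 2) * 4 * C₀ * s ^ (γ / 2) := by
        rw [hc 2 two_pos]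
        ring

end GaussianAverage

lemma moll_eq_gaussianAverage {d : ℕ} {α t : ℝ} (hα : 0 < α) (ht : 0 < t)
    (b : Euc d → Euc d) (x : Euc d) :
    moll d α b t x = gaussianAverage (t ^ (2 / α)) b x := by
  have hprefactor : (2 * π) ^ (-(d : ℝ) / 2) * t ^ (-(d : ℝ) / α) =
      (2 * π * t ^ (2 / α)) ^ (-(d : ℝ) / 2) := by
    rw [mul_rpow (x := 2 * π) (y := t ^ (2 / α)) (by positivity) (by positivity), ← rpow_mul ht.le]
    congr 2
    field_simp
  simp only [moll, gaussianAverage, if_neg ht.not_ge, finrank_euclideanSpace_fin, hprefactor]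
  congr 2 with z
  ring_nf

lemma norm_moll_sub_le {d : ℕ} {α γ C₀ t : ℝ} {b : Euc d → Euc d} (hα : 0 < α) (hγ0 : 0 < γ)
    (hγ1 : γ ≤ 1) (hC₀ : 0 ≤ C₀) (hb : ∀ x y, ‖b x - b y‖ ≤ C₀ * ‖x - y‖ ^ γ) (ht : 0 ≤ t)
    (x : Euc d) :
    ‖moll d α b t x - b x‖ ≤ 2 ^ ((d : ℝ) / 2) * 4 * C₀ * t ^ (γ / α) := by
  rcases ht.eq_or_lt with rfl | ht
  · simp [moll, zero_rpow (div_pos hγ0 hα).ne']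
  have h := norm_gaussianAverage_sub_le hC₀ hγ0 hγ1 hb (rpow_pos_of_pos ht (2 / α)) x
  rwa [← moll_eq_gaussianAverage hα ht, finrank_euclideanSpace_fin, ← rpow_mul ht.le,
    show 2 / α * (γ / 2) = γ / α by ring] at h

lemma norm_sub_moll_le {d : ℕ} {α γ C₀ δ t τ : ℝ} {b : Euc d → Euc d} (hα : 0 < α)
    (hγ0 : 0 < γ) (hγ1 : γ ≤ 1) (hC₀ : 0 ≤ C₀) (hb : ∀ x y, ‖b x - b y‖ ≤ C₀ * ‖x - y‖ ^ γ)
    (hδ : δ = 1 - 1 / α + γ / α) (ht : 0 < t) (hτ : τ ∈ Icc 0 t) (u v : Euc d) :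
    ‖b u - moll d α b τ v‖ ≤
      C₀ * t ^ (δ - 1) * ‖u - v‖ + (1 + 2 ^ ((d : ℝ) / 2) * 4) * C₀ * t ^ (γ / α) := by
  have hyoung : ‖u - v‖ ^ γ ≤ t ^ (δ - 1) * ‖u - v‖ + t ^ (γ / α) :=
    rpow_le_rpow_mul_add_rpow (norm_nonneg _) ht hγ0.le hγ1 (by rw [hδ]; field_simp; ring)
  have hmoll : ‖b v - moll d α b τ v‖ ≤ 2 ^ ((d : ℝ) / 2) * 4 * C₀ * t ^ (γ / α) := by
    rw [norm_sub_rev]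
    refine (norm_moll_sub_le hα hγ0 hγ1 hC₀ hb hτ.1 v).trans ?_
    exact mul_le_mul_of_nonneg_left (rpow_le_rpow hτ.1 hτ.2 (div_pos hγ0 hα).le) (by positivity)
  calc ‖b u - moll d α b τ v‖ ≤ ‖b u - b v‖ + ‖b v - moll d α b τ v‖ :=
        norm_sub_le_norm_sub_add_norm_sub _ _ _
    _ ≤ C₀ * (t ^ (δ - 1) * ‖u - v‖ + t ^ (γ / α)) +
          2 ^ ((d : ℝ) / 2) * 4 * C₀ * t ^ (γ / α) :=
        add_le_add ((hb u v).trans (mul_le_mul_of_nonneg_left hyoung hC₀)) hmoll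
    _ = _ := by ring

/-- Grönwall applied to `s ↦ u s - v (t - s)`, which runs from `x - v t` to `u t - y`. -/
lemma IsSol.norm_sub_le_gronwallBound {d : ℕ} {F G : ℝ → Euc d → Euc d} {x y : Euc d}
    {u v : ℝ → Euc d} {K ε t : ℝ} (hu : IsSol d F x u) (hv : IsSol d G y v) (ht : 0 ≤ t)
    (hFG : ∀ s ∈ Ico 0 t, ∀ a c, ‖F s a + G (t - s) c‖ ≤ K * ‖a - c‖ + ε) :
    ‖u t - y‖ ≤ gronwallBound ‖x - v t‖ K ε t := by
  have hcont : ContinuousOn (fun s => u s - v (t - s)) (Icc 0 t) := by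
    refine ContinuousOn.sub (fun s hs => (hu.2 s hs.1).continuousWithinAt.mono
      Icc_subset_Ici_self) ?_
    refine ContinuousOn.comp (g := v) (fun s hs => (hv.2 s hs).continuousWithinAt)
      (by fun_prop) fun s hs => sub_nonneg.2 hs.2
  have hderiv : ∀ s ∈ Ico 0 t, HasDerivWithinAt (fun s => u s - v (t - s))
      (F s (u s) + G (t - s) (v (t - s))) (Ici s) s := fun s hs => by
    have hts : 0 < t - s := sub_pos.2 hs.2
    have hv' : HasDerivAt (fun s => v (t - s)) (-G (t - s) (v (t - s))) s :=
      ((hv.2 _ hts.le).hasDerivAt (Ici_mem_nhds hts)).comp_const_sub t s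
    have h := ((hu.2 s hs.1).mono (Ici_subset_Ici.2 hs.1)).sub hv'.hasDerivWithinAt
    rwa [sub_neg_eq_add] at h
  simpa [hu.1, hv.1] using norm_le_gronwallBound_of_norm_deriv_right_le hcont hderiv
    (by simp [hu.1]) (fun s hs => hFG s hs _ _) t ⟨ht, le_rfl⟩

theorem exact_flow_vs_backward_approximate_flow_general
    (d : ℕ) (α γ C₀ : ℝ)
    (hα : α ∈ Set.Ioo (0 : ℝ) 2) (hγ : γ ∈ Set.Ioc (0 : ℝ) 1) (hC₀ : 0 < C₀)
    (b : Euc d → Euc d)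
    (hb_hol : ∀ x y, ‖b x - b y‖ ≤ C₀ * ‖x - y‖ ^ γ)
    (hbal : 1 < α + γ)
    (δ : ℝ) (hδ : δ = 1 - 1 / α + γ / α) :
    ∀ T > (0 : ℝ), ∃ C > (0 : ℝ), ∀ x y : Euc d,
      ∀ υ : ℝ → Euc d, IsSol d (fun _ z => b z) x υ →
      ∀ θ : ℝ → Euc d, IsSol d (fun τ z => -moll d α b |τ| z) y θ →
      ∀ t ∈ Set.Icc (0 : ℝ) T,
        Real.exp (-(C * t ^ δ)) * ‖x - θ t‖ - C * t ^ (1 / α + δ) ≤ ‖υ t - y‖ ∧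
        ‖υ t - y‖ ≤ Real.exp (C * t ^ δ) * ‖x - θ t‖ + C * t ^ (1 / α + δ) := by
  intro T _
  have hδ0 : 0 < δ := by
    rw [hδ, show 1 - 1 / α + γ / α = (α + γ - 1) / α by field_simp [hα.1.ne']; ring]
    exact div_pos (by linarith) hα.1
  set C₁ := (1 + 2 ^ ((d : ℝ) / 2) * 4) * C₀
  refine ⟨C₁ * rexp (C₀ * T ^ δ) + C₀, by positivity, fun x y υ hυ θ hθ t ⟨ht0, htT⟩ => ?_⟩
  rcases ht0.eq_or_lt with rfl | ht
  · rw [zero_rpow hδ0.ne', zero_rpow (add_pos (one_div_pos.2 hα.1) hδ0).ne', hυ.1, hθ.1]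
    simp
  have hdrift : ∀ τ ∈ Icc 0 t, ∀ a c, ‖b a - moll d α b τ c‖ ≤
      C₀ * t ^ (δ - 1) * ‖a - c‖ + C₁ * t ^ (1 / α + δ - 1) := fun τ hτ a c => by
    rw [show 1 / α + δ - 1 = γ / α by rw [hδ]; ring]
    exact norm_sub_moll_le hα.1 hγ.1 hγ.2 hC₀.le hb_hol hδ ht hτ a c
  have hup := hυ.norm_sub_le_gronwallBound hθ ht.le fun s hs a c => by
    rw [← sub_eq_add_neg, abs_of_nonneg (sub_nonneg.2 hs.2.le)]
    exact hdrift _ ⟨sub_nonneg.2 hs.2.le, sub_le_self _ hs.1⟩ a c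
  have hdown := hθ.norm_sub_le_gronwallBound hυ ht.le fun s hs a c => by
    rw [neg_add_eq_sub, abs_of_nonneg hs.1, norm_sub_rev a]
    exact hdrift s (Ico_subset_Icc_self hs) c a
  have hgronwall := fun B (hB : 0 ≤ B) =>
    gronwallBound_rpow_le (C₁ := C₁) (q := 1 / α + δ) hB hC₀.le (by positivity) hδ0.le ht htT
  rw [norm_sub_rev, norm_sub_rev y] at hdown
  exact ⟨exp_neg_mul_sub_le_of_le_exp_mul_add (by positivity) (by positivity)
      (hdown.trans (hgronwall _ (norm_nonneg _))),
    hup.trans (hgronwall _ (norm_nonneg _))⟩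

theorem exact_flow_vs_backward_approximate_flow
    (d : ℕ) (hd : 1 ≤ d) (α γ C₀ : ℝ)
    (hα : α ∈ Set.Ioo (0 : ℝ) 2) (hγ : γ ∈ Set.Ioc (0 : ℝ) 1) (hC₀ : 0 < C₀)
    (b : Euc d → Euc d)
    (hb_bdd : ∀ x, ‖b x‖ ≤ C₀)
    (hb_hol : ∀ x y, ‖b x - b y‖ ≤ C₀ * ‖x - y‖ ^ γ)
    (hbal : 1 < α + γ)
    (δ : ℝ) (hδ : δ = 1 - 1 / α + γ / α) :
    ∀ T > (0 : ℝ), ∃ C > (0 : ℝ), ∀ x y : Euc d,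
      ∀ υ : ℝ → Euc d, IsSol d (fun _ z => b z) x υ →
      ∀ θ : ℝ → Euc d, IsSol d (fun τ z => -moll d α b |τ| z) y θ →
      ∀ t ∈ Set.Icc (0 : ℝ) T,
        Real.exp (-(C * t ^ δ)) * ‖x - θ t‖ - C * t ^ (1 / α + δ) ≤ ‖υ t - y‖ ∧
        ‖υ t - y‖ ≤ Real.exp (C * t ^ δ) * ‖x - θ t‖ + C * t ^ (1 / α + δ) :=
  exact_flow_vs_backward_approximate_flow_general d α γ C₀ hα hγ hC₀ b hb_hol hbal δ hδ
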